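/- arXiv:1609.02526 — 2 statements merged into one kernel-verified Lean document; each statement's English description precedes it below -/
import Mathlib

section
/- Let R be a (possibly empty) list all of whose entries lie in {1,2}, and let r_1, r_2 ∈ {1,2}. Then: (a) if r_1 = 1 and r_2 = 1, then 𝔉([1,1,1] ++ R ++ [1]) = 𝔉([1] ++ R ++ [1]) + 𝔉(R ++ [1]); (b) if r_1 = 1 and r_2 = 2, then 𝔉([1,1,2] ++ R ++ [1]) = 𝔉([2] ++ R ++ [1]) + 𝔉([1] ++ R ++ [1]); (c) if r_1 = 2 and r_2 = 1, then 𝔉([1,2,1] ++ R ++ [1]) = 𝔉([1,1] ++ R ++ [1]) + 𝔉(R ++ [1]); (d) if r_1 = 2 and r_2 = 2, then 𝔉([1,2,2] ++ R ++ [1]) = 𝔉([1,2] ++ R ++ [1]) + 𝔉([1] ++ R ++ [1]). -/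
/-- The open-chain AND-OR network map determined by an operator list `ops`
(`true` = AND, `false` = OR), on `ops.length + 2` nodes. -/
def chainMap (ops : List Bool) (x : Fin (ops.length + 2) → Bool) :
    Fin (ops.length + 2) → Bool := fun i =>
  if h0 : (i : ℕ) = 0 then x ⟨1, by omega⟩
  else if hn : (i : ℕ) = ops.length + 1 then x ⟨ops.length, by omega⟩
  else
    have hi : 1 ≤ (i : ℕ) ∧ (i : ℕ) ≤ ops.length := by
      have := i.isLt; omega
    if ops.get ⟨(i : ℕ) - 1, by omega⟩
    then x ⟨(i : ℕ) - 1, by omega⟩ && x ⟨(i : ℕ) + 1, by omega⟩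
    else x ⟨(i : ℕ) - 1, by omega⟩ || x ⟨(i : ℕ) + 1, by omega⟩

/-- `F ops` is the number of fixed points of the open-chain AND-OR network. -/
noncomputable def F (ops : List Bool) : ℕ :=
  Nat.card {x : Fin (ops.length + 2) → Bool // chainMap ops x = x}

/-- Run-length encoding: block `j` (1-based) consists of `k_j` copies of
`true` if `j` is odd and `false` if `j` is even. -/
def runOps : List ℕ → List Bool
  | [] => []
  | k :: t => List.replicate k true ++ (runOps t).map (fun b => !b)

/-- `Fr L` = 𝔉(L), the number of fixed points of the open-chain AND-OR
network with run-length list `L`. -/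
noncomputable def Fr (L : List ℕ) : ℕ := F (runOps L)

lemma notnot_comp : ((fun b => !b) ∘ fun b => !b : Bool → Bool) = id :=
  funext fun b => Bool.not_not b

def step (op a c : Bool) : Bool := if op then a && c else a || c

def C (ops : List Bool) (x : Fin (ops.length + 2) → Bool) : Prop :=
  (∀ i : Fin ops.length,
      x ⟨(i : ℕ) + 1, by have := i.isLt; omega⟩ =
        step (ops.get i) (x ⟨(i : ℕ), by have := i.isLt; omega⟩)
          (x ⟨(i : ℕ) + 2, by have := i.isLt; omega⟩)) ∧
  x ⟨ops.length + 1, by omega⟩ = x ⟨ops.length, by omega⟩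

instance instDecC (ops : List Bool) : DecidablePred (C ops) := fun x => by
  unfold C; infer_instance

lemma fix_iff (ops : List Bool) (x : Fin (ops.length + 2) → Bool) :
    chainMap ops x = x ↔ x ⟨0, by omega⟩ = x ⟨1, by omega⟩ ∧ C ops x := by
  constructor
  · intro h
    have h' : ∀ i, chainMap ops x i = x i := fun i => congrFun h i
    refine ⟨?_, fun i => ?_, ?_⟩
    · have := h' ⟨0, by omega⟩
      simp only [chainMap] at this
      simp only [dif_pos trivial] at this
      exact this.symm
    · have := h' ⟨(i : ℕ) + 1, by have := i.isLt; omega⟩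
      simp only [chainMap] at this
      rw [dif_neg (by simp), dif_neg (by have := i.isLt; simp; omega)] at this
      rw [← this]
      simp only [step, Nat.add_sub_cancel, Fin.eta]
    · have := h' ⟨ops.length + 1, by omega⟩
      simp only [chainMap] at this
      rw [dif_neg (by simp)] at this
      simp only [dif_pos trivial] at this
      exact this.symm
  · rintro ⟨h01, hC, hend⟩
    funext i
    simp only [chainMap]
    by_cases h0 : (i : ℕ) = 0
    · rw [dif_pos h0]
      have : i = ⟨0, by omega⟩ := Fin.ext h0
      rw [this]; exact h01.symm
    · rw [dif_neg h0]
      by_cases hn : (i : ℕ) = ops.length + 1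
      · rw [dif_pos hn]
        have : i = ⟨ops.length + 1, by omega⟩ := Fin.ext hn
        rw [this]; exact hend.symm
      · rw [dif_neg hn]
        have hlt := i.isLt
        have hk := hC ⟨(i : ℕ) - 1, by omega⟩
        have e1 : (⟨(i : ℕ) - 1 + 1, by omega⟩ : Fin (ops.length + 2)) = i :=
          Fin.ext (by simp; omega)
        have e2 : (⟨(i : ℕ) - 1 + 2, by omega⟩ : Fin (ops.length + 2)) =
            ⟨(i : ℕ) + 1, by omega⟩ := Fin.ext (by simp; omega)
        rw [e1, e2] at hk
        rw [hk]
        simp only [step]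

def G : List Bool → Bool → Bool → ℕ
  | [], a, b => if a = b then 1 else 0
  | op :: ops, a, b =>
      (if b = step op a false then G ops b false else 0) +
      (if b = step op a true then G ops b true else 0)

noncomputable def H (ops : List Bool) (a b : Bool) : ℕ :=
  Nat.card {x : Fin (ops.length + 2) → Bool //
    x ⟨0, by omega⟩ = a ∧ x ⟨1, by omega⟩ = b ∧ C ops x}

lemma C_cons (op : Bool) (ops : List Bool)
    (x : Fin ((op :: ops).length + 2) → Bool) :
    C (op :: ops) x ↔
      (x ⟨1, by simp⟩ = step op (x ⟨0, by simp⟩) (x ⟨2, by simp only [List.length_cons]; omega⟩) ∧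
       C ops (fun j => x j.succ)) := by
  constructor
  · rintro ⟨h1, h2⟩
    exact ⟨h1 ⟨0, by simp⟩, fun j => h1 ⟨(j : ℕ) + 1, by have := j.isLt; simp only [List.length_cons]; omega⟩, h2⟩
  · rintro ⟨h0, h1, h2⟩
    refine ⟨fun i => ?_, h2⟩
    obtain ⟨iv, hlt⟩ := i
    cases iv with
    | zero => exact h0
    | succ n => exact h1 ⟨n, by simp at hlt; omega⟩

lemma card_split {n : ℕ} (p : (Fin n → Bool) → Prop) [DecidablePred p] (j : Fin n) :
    Nat.card {x : Fin n → Bool // p x} =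
      Nat.card {x : Fin n → Bool // p x ∧ x j = false} +
      Nat.card {x : Fin n → Bool // p x ∧ x j = true} := by
  classical
  simp only [Nat.card_eq_fintype_card, Fintype.card_subtype]
  have key := Finset.card_filter_add_card_filter_not
    (s := Finset.univ.filter p) (p := fun x => x j = false)
  simp only [Finset.filter_filter] at key
  simp only [Bool.not_eq_false] at key
  exact key.symm

lemma H_nil (a b : Bool) : H [] a b = if a = b then 1 else 0 := by
  rw [H, Nat.card_eq_fintype_card]
  cases a <;> cases b <;> decide

lemma card_piece (op : Bool) (ops : List Bool) (a b c : Bool) :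
    Nat.card {x : Fin ((op :: ops).length + 2) → Bool //
        (x ⟨0, by omega⟩ = a ∧ x ⟨1, by omega⟩ = b ∧ C (op :: ops) x) ∧
        x ⟨2, by simp only [List.length_cons]; omega⟩ = c} =
      if b = step op a c then H ops b c else 0 := by
  by_cases hcond : b = step op a c
  · rw [if_pos hcond, H]
    apply Nat.card_congr
    refine ⟨fun x => ⟨fun j => x.1 j.succ, ?_⟩, fun y => ⟨Fin.cons a y.1, ?_⟩, ?_, ?_⟩
    · obtain ⟨x, ⟨hx0, hx1, hxC⟩, hx2⟩ := x
      exact ⟨hx1, hx2, ((C_cons op ops x).1 hxC).2⟩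
    · obtain ⟨y, hy0, hy1, hyC⟩ := y
      refine ⟨⟨Fin.cons_zero _ _, ?_, ?_⟩, ?_⟩
      · show y ⟨0, by omega⟩ = b; exact hy0
      · rw [C_cons]
        refine ⟨?_, ?_⟩
        · show y ⟨0, by omega⟩ = step op a (y ⟨1, by omega⟩)
          rw [hy0, hy1]; exact hcond
        · show C ops (fun j => Fin.cons (α := fun _ => Bool) a y j.succ)
          simpa [Fin.cons_succ] using hyC
      · show y ⟨1, by omega⟩ = c; exact hy1
    · rintro ⟨x, ⟨hx0, hx1, hxC⟩, hx2⟩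
      apply Subtype.ext
      show Fin.cons a (fun j => x j.succ) = x
      funext i
      refine Fin.cases ?_ (fun j => ?_) i
      · rw [Fin.cons_zero]; exact hx0.symm
      · rw [Fin.cons_succ]
    · rintro ⟨y, hy0, hy1, hyC⟩
      apply Subtype.ext
      funext j
      show Fin.cons (α := fun _ => Bool) a y j.succ = y j
      rw [Fin.cons_succ]
  · rw [if_neg hcond]
    have : IsEmpty {x : Fin ((op :: ops).length + 2) → Bool //
        (x ⟨0, by omega⟩ = a ∧ x ⟨1, by omega⟩ = b ∧ C (op :: ops) x) ∧
        x ⟨2, by simp only [List.length_cons]; omega⟩ = c} := by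
      refine ⟨fun x => ?_⟩
      obtain ⟨x, ⟨hx0, hx1, hxC⟩, hx2⟩ := x
      have := ((C_cons op ops x).1 hxC).1
      rw [hx0, hx1, hx2] at this
      exact hcond this
    exact Nat.card_of_isEmpty

lemma H_cons (op : Bool) (ops : List Bool) (a b : Bool) :
    H (op :: ops) a b =
      (if b = step op a false then H ops b false else 0) +
      (if b = step op a true then H ops b true else 0) := by
  rw [H, card_split _ ⟨2, by simp only [List.length_cons]; omega⟩,
    card_piece, card_piece]

lemma H_eq_G (ops : List Bool) : ∀ a b, H ops a b = G ops a b := by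
  induction ops with
  | nil => intro a b; rw [H_nil]; rfl
  | cons op ops ih =>
      intro a b
      rw [H_cons, G]
      rw [ih, ih]

lemma F_eq_G (ops : List Bool) :
    F ops = G ops false false + G ops true true := by
  rw [F, card_split (fun x => chainMap ops x = x) ⟨0, by omega⟩,
    ← H_eq_G, ← H_eq_G, H, H]
  congr 1
  · apply Nat.card_congr
    apply Equiv.subtypeEquivRight
    intro x
    rw [fix_iff]
    constructor
    · rintro ⟨⟨h01, hC⟩, h0⟩; exact ⟨h0, h01 ▸ h0, hC⟩
    · rintro ⟨h0, h1, hC⟩; exact ⟨⟨h0.trans h1.symm, hC⟩, h0⟩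
  · apply Nat.card_congr
    apply Equiv.subtypeEquivRight
    intro x
    rw [fix_iff]
    constructor
    · rintro ⟨⟨h01, hC⟩, h0⟩; exact ⟨h0, h01 ▸ h0, hC⟩
    · rintro ⟨h0, h1, hC⟩; exact ⟨⟨h0.trans h1.symm, hC⟩, h0⟩

lemma G_map_not (ops : List Bool) : ∀ a b,
    G (ops.map (fun b => !b)) (!a) (!b) = G ops a b := by
  induction ops with
  | nil => intro a b; cases a <;> cases b <;> rfl
  | cons op ops ih =>
      intro a b
      have h1 : G (ops.map fun b => !b) false false = G ops true true := ih true true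
      have h2 : G (ops.map fun b => !b) false true = G ops true false := ih true false
      have h3 : G (ops.map fun b => !b) true false = G ops false true := ih false true
      have h4 : G (ops.map fun b => !b) true true = G ops false false := ih false false
      cases op <;> cases a <;> cases b <;>
        simp [G, step, h1, h2, h3, h4] <;> omega

/-- the four end-point recursions for run-length lists whose
entries lie in `{1, 2}`. -/
theorem andor_open_chain_endpoint_recursions (R : List ℕ)
    (hR : ∀ r ∈ R, r = 1 ∨ r = 2) :
    (Fr ([1, 1, 1] ++ R ++ [1]) = Fr ([1] ++ R ++ [1]) + Fr (R ++ [1])) ∧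
    (Fr ([1, 1, 2] ++ R ++ [1]) = Fr ([2] ++ R ++ [1]) + Fr ([1] ++ R ++ [1])) ∧
    (Fr ([1, 2, 1] ++ R ++ [1]) = Fr ([1, 1] ++ R ++ [1]) + Fr (R ++ [1])) ∧
    (Fr ([1, 2, 2] ++ R ++ [1]) = Fr ([1, 2] ++ R ++ [1]) + Fr ([1] ++ R ++ [1])) := by
  clear hR
  have h1 : G ((runOps (R ++ [1])).map fun b => !b) false false
      = G (runOps (R ++ [1])) true true := G_map_not _ true true
  have h2 : G ((runOps (R ++ [1])).map fun b => !b) false true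
      = G (runOps (R ++ [1])) true false := G_map_not _ true false
  have h3 : G ((runOps (R ++ [1])).map fun b => !b) true false
      = G (runOps (R ++ [1])) false true := G_map_not _ false true
  have h4 : G ((runOps (R ++ [1])).map fun b => !b) true true
      = G (runOps (R ++ [1])) false false := G_map_not _ false false
  refine ⟨?_, ?_, ?_, ?_⟩
  · have e1 : runOps ([1, 1, 1] ++ R ++ [1]) =
        true :: false :: true :: ((runOps (R ++ [1])).map fun b => !b) := by
      simp [runOps, List.map_map, notnot_comp, Bool.not_not]
    have e2 : runOps ([1] ++ R ++ [1]) =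
        true :: ((runOps (R ++ [1])).map fun b => !b) := by
      simp [runOps]
    simp only [Fr, e1, e2]
    rw [F_eq_G, F_eq_G, F_eq_G]
    simp [G, step, h1, h2, h3, h4] <;> omega
  · have e1 : runOps ([1, 1, 2] ++ R ++ [1]) =
        true :: false :: true :: true :: ((runOps (R ++ [1])).map fun b => !b) := by
      simp [runOps, List.map_map, notnot_comp, Bool.not_not, List.replicate]
    have e2 : runOps ([2] ++ R ++ [1]) =
        true :: true :: ((runOps (R ++ [1])).map fun b => !b) := by
      simp [runOps, List.replicate]
    have e3 : runOps ([1] ++ R ++ [1]) =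
        true :: ((runOps (R ++ [1])).map fun b => !b) := by
      simp [runOps]
    simp only [Fr, e1, e2, e3]
    rw [F_eq_G, F_eq_G, F_eq_G]
    simp [G, step, h1, h2, h3, h4] <;> omega
  · have e1 : runOps ([1, 2, 1] ++ R ++ [1]) =
        true :: false :: false :: true :: ((runOps (R ++ [1])).map fun b => !b) := by
      simp [runOps, List.map_map, notnot_comp, Bool.not_not, List.replicate]
    have e2 : runOps ([1, 1] ++ R ++ [1]) =
        true :: false :: runOps (R ++ [1]) := by
      simp [runOps, List.map_map, notnot_comp, Bool.not_not]
    simp only [Fr, e1, e2]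
    rw [F_eq_G, F_eq_G, F_eq_G]
    simp [G, step, h1, h2, h3, h4] <;> omega
  · have e1 : runOps ([1, 2, 2] ++ R ++ [1]) =
        true :: false :: false :: true :: true ::
          ((runOps (R ++ [1])).map fun b => !b) := by
      simp [runOps, List.map_map, notnot_comp, Bool.not_not, List.replicate]
    have e2 : runOps ([1, 2] ++ R ++ [1]) =
        true :: false :: false :: runOps (R ++ [1]) := by
      simp [runOps, List.map_map, notnot_comp, Bool.not_not, List.replicate]
    have e3 : runOps ([1] ++ R ++ [1]) =
        true :: ((runOps (R ++ [1])).map fun b => !b) := by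
      simp [runOps]
    simp only [Fr, e1, e2, e3]
    rw [F_eq_G, F_eq_G, F_eq_G]
    simp [G, step, h1, h2, h3, h4] <;> omega
end

section
/- For every natural number n ≥ 0 and all positive natural numbers r_1,…,r_n, one has a_{n+5} ≤ 𝔉([1, r_1, …, r_n, 1]) ≤ Fib(n+4), where (a_k) is the Padovan sequence and Fib is the Fibonacci sequence with Fib(1) = Fib(2) = 1; both bounds are attained (the lower bound when all r_i = 1 and the upper bound when all r_i = 2). -/
/-- The Padovan sequence: `a 0 = a 1 = a 2 = 1` and `a (k+3) = a (k+1) + a k`. -/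
def padovan : ℕ → ℕ
  | 0 => 1
  | 1 => 1
  | 2 => 1
  | n + 3 => padovan (n + 1) + padovan n


def nodeVal (op u v : Bool) : Bool := if op then u && v else u || v

lemma chainMap_zero (ops : List Bool) (x : Fin (ops.length + 2) → Bool)
    (h : (0:ℕ) < ops.length + 2) :
    chainMap ops x ⟨0, h⟩ = x ⟨1, by omega⟩ := by
  simp [chainMap]

lemma chainMap_last (ops : List Bool) (x : Fin (ops.length + 2) → Bool)
    (h : ops.length + 1 < ops.length + 2) :
    chainMap ops x ⟨ops.length + 1, h⟩ = x ⟨ops.length, by omega⟩ := by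
  simp [chainMap]

lemma chainMap_mid (ops : List Bool) (x : Fin (ops.length + 2) → Bool)
    (i : ℕ) (h1 : 1 ≤ i) (h2 : i ≤ ops.length) (h : i < ops.length + 2) :
    chainMap ops x ⟨i, h⟩ =
      nodeVal (ops.get ⟨i - 1, by omega⟩) (x ⟨i - 1, by omega⟩) (x ⟨i + 1, by omega⟩) := by
  have h0 : i ≠ 0 := by omega
  have hn : i ≠ ops.length + 1 := by omega
  simp [chainMap, h0, hn, nodeVal]

def Good : (ops : List Bool) → (Fin (ops.length + 2) → Bool) → Prop
  | [], x => x ⟨0, by omega⟩ = x ⟨1, by omega⟩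
  | op :: ops, x =>
      x ⟨1, by simp⟩ = nodeVal op (x ⟨0, by simp⟩) (x ⟨2, by simp⟩) ∧
      Good ops (Fin.tail x)

lemma chainMap_tail (op : Bool) (ops : List Bool) (x : Fin (ops.length + 3) → Bool)
    (j : ℕ) (hj : j + 1 ≤ ops.length + 1) :
    chainMap (op :: ops) x ⟨j + 2, by simp; omega⟩
      = chainMap ops (Fin.tail x) ⟨j + 1, by omega⟩ := by
  rcases eq_or_lt_of_le hj with h | h
  · have hjl : j = ops.length := by omega
    subst hjl
    have e : (⟨ops.length + 2, by simp⟩ : Fin ((op :: ops).length + 2)) =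
        ⟨(op :: ops).length + 1, by simp⟩ := rfl
    rw [e, chainMap_last, chainMap_last]
    rfl
  · have h2 : j + 1 ≤ ops.length := by omega
    rw [chainMap_mid (op :: ops) x (j+2) (by omega) (by simp; omega),
        chainMap_mid ops (Fin.tail x) (j+1) (by omega) (by omega)]
    rfl

lemma Good_iff : ∀ (ops : List Bool) (x : Fin (ops.length + 2) → Bool),
    Good ops x ↔ ∀ i : Fin (ops.length + 2), (i : ℕ) ≠ 0 → chainMap ops x i = x i
  | [], x => by
    constructor
    · intro h i hi
      obtain ⟨v, hv⟩ := i
      have hv2 : v < 2 := hv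
      have hv0 : v ≠ 0 := hi
      have : v = 1 := by omega
      subst this
      have e : (⟨1, hv⟩ : Fin ([] : List Bool).length.succ.succ) =
          ⟨([] : List Bool).length + 1, by simp⟩ := rfl
      rw [e, chainMap_last]
      exact h
    · intro h
      have := h ⟨1, by omega⟩ (by simp)
      rw [show (⟨1, by omega⟩ : Fin ([] : List Bool).length.succ.succ) =
          ⟨([] : List Bool).length + 1, by simp⟩ from rfl, chainMap_last] at this
      exact this
  | op :: ops, x => by
    constructor
    · rintro ⟨h1, h2⟩ i hi
      obtain ⟨v, hv⟩ := i
      match v, hv with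
      | 1, hv =>
        rw [chainMap_mid (op :: ops) x 1 le_rfl (by simp)]
        exact h1.symm
      | (j+2), hv =>
        have hj : j + 1 ≤ ops.length + 1 := by simp at hv; omega
        rw [chainMap_tail op ops x j hj]
        have := (Good_iff ops (Fin.tail x)).mp h2 ⟨j+1, by omega⟩ (by simp)
        exact this
    · intro h
      constructor
      · have := h ⟨1, by simp⟩ (by simp)
        rw [chainMap_mid (op :: ops) x 1 le_rfl (by simp)] at this
        exact this.symm
      · refine (Good_iff ops (Fin.tail x)).mpr ?_
        rintro ⟨v, hv⟩ hvne
        match v, hv, hvne with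
        | (j+1), hv, _ =>
          have hj : j + 1 ≤ ops.length + 1 := by omega
          rw [← chainMap_tail op ops x j hj]
          exact h ⟨j+2, by simp; omega⟩ (by simp)

lemma fixed_iff (ops : List Bool) (x : Fin (ops.length + 2) → Bool) :
    chainMap ops x = x ↔ (x ⟨0, by omega⟩ = x ⟨1, by omega⟩ ∧ Good ops x) := by
  rw [funext_iff, Good_iff]
  constructor
  · intro h
    refine ⟨?_, fun i hi => h i⟩
    have := h ⟨0, by omega⟩
    rw [chainMap_zero] at this
    exact this.symm
  · rintro ⟨h0, h⟩ i
    obtain ⟨v, hv⟩ := i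
    match v, hv with
    | 0, hv => rw [chainMap_zero]; exact h0.symm
    | (j+1), hv => exact h ⟨j+1, hv⟩ (by simp)

def cnt : List Bool → Bool → Bool → ℕ
  | [], a, b => if a = b then 1 else 0
  | op :: ops, a, b =>
      (if b = nodeVal op a true then cnt ops b true else 0) +
      (if b = nodeVal op a false then cnt ops b false else 0)

lemma card_split_bool {α : Type*} [Finite α] (f : α → Bool) (P : α → Prop) :
    Nat.card {x // P x} =
      Nat.card {x // f x = true ∧ P x} + Nat.card {x // f x = false ∧ P x} := by
  rw [← Nat.card_sum]
  apply Nat.card_congr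
  refine ⟨fun x => if h : f x.1 = true then .inl ⟨x.1, h, x.2⟩
      else .inr ⟨x.1, by simpa using h, x.2⟩,
    Sum.elim (fun x => ⟨x.1, x.2.2⟩) (fun x => ⟨x.1, x.2.2⟩), ?_, ?_⟩
  · rintro ⟨x, hx⟩
    by_cases h : f x = true <;> simp [h]
  · rintro (⟨x, hx1, hx2⟩ | ⟨x, hx1, hx2⟩) <;> simp [hx1]

lemma card_fix_head (n : ℕ) (a : Bool) (R : (Fin (n+1) → Bool) → Prop) :
    Nat.card {x : Fin (n+1) → Bool // x 0 = a ∧ R x} =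
      Nat.card {y : Fin n → Bool // R (Fin.cons a y)} := by
  apply Nat.card_congr
  refine ⟨fun x => ⟨Fin.tail x.1, ?_⟩, fun y => ⟨Fin.cons a y.1, by simp, y.2⟩, ?_, ?_⟩
  · obtain ⟨x, h0, hR⟩ := x
    simpa [← h0, Fin.cons_self_tail] using hR
  · rintro ⟨x, h0, hR⟩
    ext i
    simp [← h0, Fin.cons_self_tail]
  · rintro ⟨y, hy⟩
    ext i
    simp [Fin.tail_cons]

lemma card_good : ∀ (ops : List Bool) (a b : Bool),
    Nat.card {x : Fin (ops.length + 2) → Bool //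
      x ⟨0, by omega⟩ = a ∧ x ⟨1, by omega⟩ = b ∧ Good ops x} = cnt ops a b
  | [], a, b => by
    by_cases hab : a = b
    · rw [show cnt [] a b = 1 by simp [cnt, hab]]
      haveI : Unique {x : Fin (([] : List Bool).length + 2) → Bool //
          x ⟨0, by omega⟩ = a ∧ x ⟨1, by omega⟩ = b ∧ Good [] x} :=
        { default := ⟨fun _ => a, rfl, hab, rfl⟩
          uniq := by
            rintro ⟨x, h0, h1, he⟩
            apply Subtype.ext
            funext i
            obtain ⟨v, hv⟩ := i
            match v, hv with
            | 0, hv => exact h0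
            | 1, hv => exact h1.trans hab.symm }
      exact Nat.card_unique
    · rw [show cnt [] a b = 0 by simp [cnt, hab]]
      haveI : IsEmpty {x : Fin (([] : List Bool).length + 2) → Bool //
          x ⟨0, by omega⟩ = a ∧ x ⟨1, by omega⟩ = b ∧ Good [] x} := by
        constructor
        rintro ⟨x, h0, h1, he⟩
        exact hab (by rw [← h0, ← h1]; exact he)
      exact Nat.card_of_isEmpty
  | op :: ops, a, b => by
    have p0 : 0 < ops.length + 2 := by omega
    have p1 : 1 < ops.length + 2 := by omega
    have e1 : Nat.card {x : Fin ((op :: ops).length + 2) → Bool //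
          x ⟨0, by omega⟩ = a ∧ x ⟨1, by omega⟩ = b ∧ Good (op :: ops) x}
        = Nat.card {x : Fin (ops.length + 2 + 1) → Bool //
          x 0 = a ∧ (x 1 = b ∧ Good (op :: ops) x)} := by
      apply Nat.card_congr
      apply Equiv.subtypeEquivRight
      intro x
      rw [Fin.mk_zero, Fin.mk_one]
    rw [e1, card_fix_head]
    have e3 : ∀ y : Fin (ops.length + 2) → Bool,
        ((Fin.cons a y : Fin (ops.length + 2 + 1) → Bool) 1 = b ∧
          Good (op :: ops) (Fin.cons a y)) ↔
        (y ⟨0, p0⟩ = b ∧ b = nodeVal op a (y ⟨1, p1⟩) ∧ Good ops y) := by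
      intro y
      have hc1 : (Fin.cons a y : Fin (ops.length + 2 + 1) → Bool) 1 = y ⟨0, p0⟩ := by
        rw [← Fin.succ_zero_eq_one, Fin.cons_succ, Fin.mk_zero]
      have hG : Good (op :: ops) (Fin.cons a y) ↔
          (y ⟨0, p0⟩ = nodeVal op a (y ⟨1, p1⟩) ∧ Good ops y) := Iff.rfl
      rw [hc1, hG]
      constructor
      · rintro ⟨h0, h1, h2⟩
        exact ⟨h0, by rw [← h0]; exact h1, h2⟩
      · rintro ⟨h0, h1, h2⟩
        exact ⟨h0, by rw [h0]; exact h1, h2⟩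
    rw [Nat.card_congr (Equiv.subtypeEquivRight e3)]
    rw [card_split_bool (fun y => y ⟨1, p1⟩)]
    have e4 : ∀ c : Bool,
        Nat.card {y : Fin (ops.length + 2) → Bool //
          y ⟨1, p1⟩ = c ∧ (y ⟨0, p0⟩ = b ∧ b = nodeVal op a (y ⟨1, p1⟩) ∧ Good ops y)}
        = if b = nodeVal op a c then cnt ops b c else 0 := by
      intro c
      split_ifs with h
      · rw [← card_good ops b c]
        apply Nat.card_congr
        apply Equiv.subtypeEquivRight
        intro y
        constructor
        · rintro ⟨h1, h0, hc, hg⟩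
          exact ⟨h0, h1, hg⟩
        · rintro ⟨h0, h1, hg⟩
          exact ⟨h1, h0, by rw [h1]; exact h, hg⟩
      · haveI : IsEmpty {y : Fin (ops.length + 2) → Bool //
            y ⟨1, p1⟩ = c ∧ (y ⟨0, p0⟩ = b ∧ b = nodeVal op a (y ⟨1, p1⟩) ∧ Good ops y)} := by
          constructor
          rintro ⟨y, h1, h0, hc, hg⟩
          rw [h1] at hc
          exact h hc
        exact Nat.card_of_isEmpty
    rw [e4 true, e4 false]
    rfl

lemma F_eq (ops : List Bool) : F ops = cnt ops true true + cnt ops false false := by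
  have p0 : 0 < ops.length + 2 := by omega
  have p1 : 1 < ops.length + 2 := by omega
  rw [F, card_split_bool (fun x => x ⟨0, p0⟩)]
  congr 1
  · rw [← card_good ops true true]
    apply Nat.card_congr
    apply Equiv.subtypeEquivRight
    intro x
    rw [fixed_iff]
    constructor
    · rintro ⟨h0, he, hg⟩
      exact ⟨h0, by rw [← he]; exact h0, hg⟩
    · rintro ⟨h0, h1, hg⟩
      exact ⟨h0, h0.trans h1.symm, hg⟩
  · rw [← card_good ops false false]
    apply Nat.card_congr
    apply Equiv.subtypeEquivRight
    intro x
    rw [fixed_iff]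
    constructor
    · rintro ⟨h0, he, hg⟩
      exact ⟨h0, by rw [← he]; exact h0, hg⟩
    · rintro ⟨h0, h1, hg⟩
      exact ⟨h0, h0.trans h1.symm, hg⟩

lemma cnt_map_not (ops : List Bool) : ∀ a b : Bool,
    cnt (ops.map (fun x => !x)) a b = cnt ops (!a) (!b) := by
  induction ops with
  | nil => intro a b; cases a <;> cases b <;> simp [cnt]
  | cons op t ih =>
    intro a b
    cases op <;> cases a <;> cases b <;> (simp [cnt, nodeVal, ih] <;> omega)

lemma cnt_cons (op : Bool) (l : List Bool) (a b : Bool) :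
    cnt (op :: l) a b = (if b = nodeVal op a true then cnt l b true else 0) +
      (if b = nodeVal op a false then cnt l b false else 0) := rfl

lemma cnt_stab (l : List Bool) (a b : Bool) :
    cnt (true :: true :: true :: l) a b = cnt (true :: true :: l) a b := by
  cases a <;> cases b <;> simp [cnt, nodeVal] <;> omega

lemma cnt_rep2 (l : List Bool) : ∀ (k : ℕ) (a b : Bool),
    cnt (List.replicate (k + 2) true ++ l) a b = cnt (true :: true :: l) a b := by
  intro k
  induction k with
  | zero => intro a b; rfl
  | succ k ih =>
    intro a b
    have e : List.replicate (k + 3) true ++ l = true :: (List.replicate (k + 2) true ++ l) := rfl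
    rw [e]
    have h2 : cnt (true :: (List.replicate (k + 2) true ++ l)) a b
        = cnt (true :: true :: true :: l) a b := by
      rw [cnt_cons]
      simp only [ih]
      cases a <;> cases b <;> (simp [cnt, nodeVal] <;> omega)
    rw [h2, cnt_stab]

def Pc (M : List ℕ) : ℕ := cnt (runOps M) true true
def Qc (M : List ℕ) : ℕ := cnt (runOps M) true false
def Sc (M : List ℕ) : ℕ := cnt (runOps M) false false

lemma Fr_eq (L : List ℕ) : Fr L = Pc L + Sc L := F_eq (runOps L)

lemma step1 (M : List ℕ) :
    Pc (1 :: M) = Sc M ∧ Qc (1 :: M) = Pc M ∧ Sc (1 :: M) = Qc M + Pc M := by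
  refine ⟨?_, ?_, ?_⟩ <;>
    simp [Pc, Qc, Sc, runOps, cnt, nodeVal, cnt_map_not]

lemma step2 (k : ℕ) (M : List ℕ) :
    Pc ((k + 2) :: M) = Sc M ∧ Qc ((k + 2) :: M) = Qc M + Pc M ∧
      Sc ((k + 2) :: M) = Qc M + Pc M := by
  have e : runOps ((k + 2) :: M) = List.replicate (k + 2) true ++ (runOps M).map (fun b => !b) := rfl
  unfold Pc Qc Sc
  rw [e, cnt_rep2, cnt_rep2, cnt_rep2]
  refine ⟨?_, ?_, ?_⟩ <;> (simp [cnt, nodeVal, cnt_map_not] <;> omega)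

lemma pad_eq (n : ℕ) : padovan (n + 3) = padovan (n + 1) + padovan n := rfl

lemma bounds : ∀ (R : List ℕ), (∀ r ∈ R, 1 ≤ r) →
    (padovan (R.length + 1) ≤ Pc (R ++ [1]) ∧ padovan R.length ≤ Qc (R ++ [1]) ∧
      padovan (R.length + 2) ≤ Sc (R ++ [1])) ∧
    (Pc (R ++ [1]) ≤ Nat.fib (R.length + 1) ∧ Qc (R ++ [1]) ≤ Nat.fib (R.length + 2) ∧
      Sc (R ++ [1]) ≤ Nat.fib (R.length + 2)) := by
  intro R
  induction R with
  | nil => intro _; decide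
  | cons r R' ih =>
    intro hpos
    obtain ⟨⟨l1, l2, l3⟩, ⟨u1, u2, u3⟩⟩ := ih (fun x hx => hpos x (by simp [hx]))
    set m := R'.length with hm
    have hlen : (r :: R').length = m + 1 := rfl
    have hrw : (r :: R') ++ [1] = r :: (R' ++ [1]) := rfl
    rw [hrw, hlen]
    have n1 : m + 1 + 1 = m + 2 := rfl
    have n2 : m + 1 + 2 = m + 3 := rfl
    rw [n1, n2]
    have hp3 : padovan (m + 3) = padovan (m + 1) + padovan m := pad_eq m
    have hf3 : Nat.fib (m + 3) = Nat.fib (m + 1) + Nat.fib (m + 2) := Nat.fib_add_two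
    have hr : 1 ≤ r := hpos r (by simp)
    rcases Nat.exists_eq_add_of_le hr with ⟨k, hk⟩
    rcases k with _ | k
    · -- r = 1
      have : r = 1 := by omega
      subst this
      obtain ⟨s1, s2, s3⟩ := step1 (R' ++ [1])
      rw [s1, s2, s3]
      refine ⟨⟨l3, ?_, ?_⟩, ⟨u3, ?_, ?_⟩⟩ <;> omega
    · -- r = k + 2
      have : r = k + 2 := by omega
      subst this
      obtain ⟨s1, s2, s3⟩ := step2 k (R' ++ [1])
      rw [s1, s2, s3]
      refine ⟨⟨l3, ?_, ?_⟩, ⟨u3, ?_, ?_⟩⟩ <;> omega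

lemma exact1 : ∀ n : ℕ,
    Pc (List.replicate n 1 ++ [1]) = padovan (n + 1) ∧
    Qc (List.replicate n 1 ++ [1]) = padovan n ∧
    Sc (List.replicate n 1 ++ [1]) = padovan (n + 2) := by
  intro n
  induction n with
  | zero => decide
  | succ n ih =>
    obtain ⟨e1, e2, e3⟩ := ih
    have hrw : List.replicate (n + 1) 1 ++ [1] = 1 :: (List.replicate n 1 ++ [1]) := rfl
    obtain ⟨s1, s2, s3⟩ := step1 (List.replicate n 1 ++ [1])
    rw [hrw, s1, s2, s3, e1, e2, e3]
    refine ⟨rfl, rfl, ?_⟩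
    rw [pad_eq n]
    omega

lemma exact2 : ∀ n : ℕ,
    Pc (List.replicate n 2 ++ [1]) = Nat.fib (n + 1) ∧
    Qc (List.replicate n 2 ++ [1]) = Nat.fib (n + 2) ∧
    Sc (List.replicate n 2 ++ [1]) = Nat.fib (n + 2) := by
  intro n
  induction n with
  | zero => decide
  | succ n ih =>
    obtain ⟨e1, e2, e3⟩ := ih
    have hrw : List.replicate (n + 1) 2 ++ [1] = (0 + 2) :: (List.replicate n 2 ++ [1]) := rfl
    obtain ⟨s1, s2, s3⟩ := step2 0 (List.replicate n 2 ++ [1])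
    rw [hrw, s1, s2, s3, e1, e2, e3]
    have hfe : Nat.fib (n + 3) = Nat.fib (n + 1) + Nat.fib (n + 2) := Nat.fib_add_two
    have nn : n + 1 + 2 = n + 3 := rfl
    have nn1 : n + 1 + 1 = n + 2 := rfl
    rw [nn, nn1]
    refine ⟨rfl, by omega, by omega⟩



/-- sharp bounds `a_{n+5} ≤ 𝔉(1,r₁,…,rₙ,1) ≤ Fib (n+4)`,
attained when all `rᵢ = 1` resp. all `rᵢ = 2`. -/
theorem andor_open_chain_sharp_bounds (n : ℕ) (R : List ℕ)
    (hlen : R.length = n) (hpos : ∀ r ∈ R, 1 ≤ r) :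
    padovan (n + 5) ≤ Fr (1 :: R ++ [1]) ∧
    Fr (1 :: R ++ [1]) ≤ Nat.fib (n + 4) ∧
    Fr (1 :: List.replicate n 1 ++ [1]) = padovan (n + 5) ∧
    Fr (1 :: List.replicate n 2 ++ [1]) = Nat.fib (n + 4) := by
  subst hlen
  have key : ∀ M : List ℕ, Fr (1 :: M) = Sc M + (Qc M + Pc M) := by
    intro M
    obtain ⟨s1, s2, s3⟩ := step1 M
    rw [Fr_eq, s1, s3]
  have hcons : (1 :: R ++ [1] : List ℕ) = 1 :: (R ++ [1]) := by simp
  have hcons1 : (1 :: List.replicate R.length 1 ++ [1] : List ℕ) = 1 :: (List.replicate R.length 1 ++ [1]) := by simp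
  have hcons2 : (1 :: List.replicate R.length 2 ++ [1] : List ℕ) = 1 :: (List.replicate R.length 2 ++ [1]) := by simp
  rw [hcons, hcons1, hcons2, key, key, key]
  obtain ⟨⟨l1, l2, l3⟩, ⟨u1, u2, u3⟩⟩ := bounds R hpos
  obtain ⟨a1, a2, a3⟩ := exact1 R.length
  obtain ⟨b1, b2, b3⟩ := exact2 R.length
  have hp5 : padovan (R.length + 5) = padovan (R.length + 3) + padovan (R.length + 2) := pad_eq (R.length + 2)
  have hp3 : padovan (R.length + 3) = padovan (R.length + 1) + padovan R.length := pad_eq R.length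
  have hf4 : Nat.fib (R.length + 4) = Nat.fib (R.length + 2) + Nat.fib (R.length + 3) := Nat.fib_add_two
  have hf3 : Nat.fib (R.length + 3) = Nat.fib (R.length + 1) + Nat.fib (R.length + 2) := Nat.fib_add_two
  refine ⟨?_, ?_, ?_, ?_⟩ <;> omega
end
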